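/- Let A, B, C be positive integers with D := B² − 4AC > 0, and let q(m,n) = A·m² + B·m·n + C·n². Then the series whose terms are 1/(q(x)·q(y)·q(x+y)), summed over all pairs (x,y) ∈ S, converges and its sum equals (1/D)·( B/(A·C) − 2·arsinh( (B/(A·C))·(√D/2) )/√D ), where arsinh is the inverse hyperbolic sine. (This is the paper's Theorem 6, formula (top3), for the topograph of q rooted at the standard-basis edge, with r₀ = A, t₀ = C, e₀ = B; positivity of A, B, C guarantees q > 0 on the nonnegative cone, so the rooted half is admissible.) -/

import Mathlib

/-- The binary quadratic form `q(m,n) = A m² + B m n + C n²`, with real values. -/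
noncomputable def q (A B C : ℤ) (v : ℤ × ℤ) : ℝ :=
  (A : ℝ) * (v.1 : ℝ) ^ 2 + (B : ℝ) * (v.1 : ℝ) * (v.2 : ℝ) + (C : ℝ) * (v.2 : ℝ) ^ 2

/-- Pairs of lattice vectors with nonnegative coordinates and determinant one. -/
def S : Set ((ℤ × ℤ) × (ℤ × ℤ)) :=
  {p | 0 ≤ p.1.1 ∧ 0 ≤ p.1.2 ∧ 0 ≤ p.2.1 ∧ 0 ≤ p.2.2 ∧
    p.1.1 * p.2.2 - p.1.2 * p.2.1 = 1}

/-!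
The pairs in `S` form a binary tree rooted at `((1,0),(0,1))`, the children of `(x, y)` being
`(x, x + y)` and `(x + y, y)`. With `r = q x`, `t = q y` and `e = q (x + y) - q x - q y`, the
discriminant `e² - 4rt = D` is the same at every vertex, and the children carry the labels
`(r, r + t + e, e + 2r)` and `(r + t + e, t, e + 2t)`. By the addition law of `arsinh`, the closed
form `F(r, t, e)` of the statement satisfies `F = 1 / (r t (r + t + e)) + F(child₁) + F(child₂)`,
so the series telescopes. The remainder, the sum of `F` over the vertices at depth `n`, is
`O(1 / n)`: `F ≤ c / (r t) = c (e / (r t)) / e`, the label `e` is at least `n + 1` at depth `n`,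
and the sum of `e / (r t)` over a level does not increase with the depth.
-/

open Finset Filter Topology Real
open QuadraticMap (polar)

namespace Real

lemma arsinh_le_self {x : ℝ} (hx : 0 ≤ x) : arsinh x ≤ x := by
  simpa using self_le_sinh_iff.mpr (arsinh_nonneg_iff.mpr hx)

lemma self_sub_arsinh_le (x : ℝ) : x - arsinh x ≤ x ^ 2 / 2 := by
  -- `1 - arsinh x ≤ exp (-arsinh x) = √(1 + x²) - x`
  have hexp := add_one_le_exp (arsinh (-x))
  rw [exp_arsinh, arsinh_neg, neg_sq] at hexp
  have hsqrt : √(1 + x ^ 2) ≤ 1 + x ^ 2 / 2 :=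
    (sqrt_le_left (by positivity)).mpr (by nlinarith [sq_nonneg (x ^ 2)])
  linarith

lemma arsinh_add_arsinh (a b : ℝ) :
    arsinh a + arsinh b = arsinh (a * √(1 + b ^ 2) + b * √(1 + a ^ 2)) := by
  apply sinh_injective
  rw [sinh_add, sinh_arsinh, sinh_arsinh, sinh_arsinh, cosh_arsinh, cosh_arsinh]
  ring

end Real

/-- The closed form (top3) of the sum over the half-topograph below an edge whose two adjacent
regions carry the labels `r`, `t`, the edge itself carrying `e`. -/
noncomputable def rootedSum (D r t e : ℝ) : ℝ :=
  1 / D * (e / (r * t) - 2 * arsinh (e / (r * t) * (√D / 2)) / √D)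

section
variable {D r t e : ℝ}

lemma rootedSum_eq_mul_sub_arsinh (hD : 0 < D) :
    rootedSum D r t e = 2 / (D * √D) *
      (e / (r * t) * (√D / 2) - arsinh (e / (r * t) * (√D / 2))) := by
  have hd : 0 < √D := sqrt_pos.mpr hD
  unfold rootedSum
  field_simp

lemma rootedSum_nonneg (hD : 0 < D) (h : 0 ≤ e / (r * t)) : 0 ≤ rootedSum D r t e := by
  rw [rootedSum_eq_mul_sub_arsinh hD]
  exact mul_nonneg (by positivity) (sub_nonneg.mpr (arsinh_le_self (by positivity)))

lemma rootedSum_le (hD : 0 < D) (hrt : 1 ≤ r * t) (h : e ^ 2 - 4 * (r * t) = D) :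
    rootedSum D r t e ≤ (D + 4) / (4 * √D) / (r * t) := by
  have hd : 0 < √D := sqrt_pos.mpr hD
  have hd2 : √D ^ 2 = D := sq_sqrt hD.le
  rw [rootedSum_eq_mul_sub_arsinh hD]
  set P := r * t
  have hP : 0 < P := by linarith
  set σ := e / P * (√D / 2)
  calc 2 / (D * √D) * (σ - arsinh σ) ≤ 2 / (D * √D) * (σ ^ 2 / 2) := by
        gcongr; exact self_sub_arsinh_le σ
    _ = (D / P + 4) / (4 * √D) / P := by
        simp only [σ]; field_simp; rw [hd2, ← h]; ring
    _ ≤ (D + 4) / (4 * √D) / P := by gcongr; exact div_le_self hD.le hrt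

lemma rootedSum_eq_add (hD : 0 < D) (hr : 0 < r) (ht : 0 < t) (he : 0 < e)
    (h : e ^ 2 - 4 * (r * t) = D) :
    rootedSum D r t e = 1 / (r * t * (r + t + e)) + rootedSum D r (r + t + e) (e + 2 * r)
      + rootedSum D (r + t + e) t (e + 2 * t) := by
  set s := r + t + e
  have hs : 0 < s := by positivity
  have hd : 0 < √D := sqrt_pos.mpr hD
  have hd2 : √D ^ 2 = D := sq_sqrt hD.le
  -- `(e + 2r)² = D + 4rs` and `(e + 2t)² = D + 4st`
  have hcosh₁ : √(1 + ((e + 2 * r) / (r * s) * (√D / 2)) ^ 2) = 1 + D / (2 * (r * s)) := by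
    rw [sqrt_eq_iff_eq_sq (by positivity) (by positivity)]
    field_simp
    rw [hd2]
    linear_combination D * h
  have hcosh₂ : √(1 + ((e + 2 * t) / (s * t) * (√D / 2)) ^ 2) = 1 + D / (2 * (s * t)) := by
    rw [sqrt_eq_iff_eq_sq (by positivity) (by positivity)]
    field_simp
    rw [hd2]
    linear_combination D * h
  have harsinh : arsinh (e / (r * t) * (√D / 2)) =
      arsinh ((e + 2 * r) / (r * s) * (√D / 2)) + arsinh ((e + 2 * t) / (s * t) * (√D / 2)) := by
    rw [arsinh_add_arsinh, hcosh₁, hcosh₂]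
    congr 1
    field_simp
    linear_combination 2 * s * h
  unfold rootedSum
  rw [harsinh]
  field_simp
  linear_combination √D * h

lemma children_ratio_le (hr : 0 < r) (ht : 0 < t) (he : 0 < e) (h : 0 ≤ e ^ 2 - 4 * (r * t)) :
    (e + 2 * r) / (r * (r + t + e)) + (e + 2 * t) / ((r + t + e) * t) ≤ e / (r * t) := by
  have hs : 0 < r + t + e := by positivity
  have key : e / (r * t) - ((e + 2 * r) / (r * (r + t + e)) + (e + 2 * t) / ((r + t + e) * t))
      = (e ^ 2 - 4 * (r * t)) / (r * t * (r + t + e)) := by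
    field_simp; ring
  have : 0 ≤ (e ^ 2 - 4 * (r * t)) / (r * t * (r + t + e)) := by positivity
  linarith

end

def words : ℕ → Finset (List Bool)
  | 0 => {[]}
  | n + 1 => (words n).image (List.cons false) ∪ (words n).image (List.cons true)

lemma mem_words {n : ℕ} {w : List Bool} : w ∈ words n ↔ w.length = n := by
  induction n generalizing w with
  | zero => simp [words]
  | succ n ih =>
    cases w with
    | nil => simp [words]
    | cons b w => cases b <;> simp [words, ih]

lemma sum_words_succ (f : List Bool → ℝ) (n : ℕ) :
    ∑ w ∈ words (n + 1), f w = ∑ w ∈ words n, (f (false :: w) + f (true :: w)) := by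
  rw [words, sum_union, sum_image, sum_image, sum_add_distrib]
  · simp
  · simp
  · simp [disjoint_left]

lemma sum_words_le {G : List Bool → ℝ} (hG : ∀ w, G (false :: w) + G (true :: w) ≤ G w)
    (n : ℕ) : ∑ w ∈ words n, G w ≤ G [] := by
  induction n with
  | zero => simp [words]
  | succ n ih => exact (sum_words_succ G n).trans_le ((sum_le_sum fun w _ => hG w).trans ih)

lemma sum_range_sum_words_add {f Φ : List Bool → ℝ}
    (hΦ : ∀ w, Φ w = f w + Φ (false :: w) + Φ (true :: w)) (n : ℕ) :
    ∑ k ∈ range n, ∑ w ∈ words k, f w + ∑ w ∈ words n, Φ w = Φ [] := by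
  induction n with
  | zero => simp [words]
  | succ n ih =>
    rw [← ih, sum_range_succ, sum_words_succ, add_assoc, ← sum_add_distrib]
    congr 1
    exact sum_congr rfl fun w _ => by rw [hΦ w]; ring

lemma tendsto_sum_words_zero {Φ G : List Bool → ℝ} {c : ℝ} (hc : 0 ≤ c) (hΦ : ∀ w, 0 ≤ Φ w)
    (hG : ∀ w, G (false :: w) + G (true :: w) ≤ G w)
    (hΦG : ∀ w, Φ w ≤ c * G w / (w.length + 1)) :
    Tendsto (fun n => ∑ w ∈ words n, Φ w) atTop (𝓝 0) := by
  have hbound (n : ℕ) : ∑ w ∈ words n, Φ w ≤ c * G [] * (1 / (n + 1)) :=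
    calc ∑ w ∈ words n, Φ w ≤ ∑ w ∈ words n, c / (n + 1) * G w :=
          sum_le_sum fun w hw => by
            rw [div_mul_eq_mul_div, ← mem_words.mp hw]
            exact hΦG w
      _ ≤ c / (n + 1) * G [] := by rw [← mul_sum]; gcongr; exact sum_words_le hG n
      _ = c * G [] * (1 / (n + 1)) := by ring
  refine squeeze_zero (fun n => sum_nonneg fun w _ => hΦ w) hbound ?_
  simpa using tendsto_one_div_add_atTop_nhds_zero_nat.const_mul (c * G [])

lemma hasSum_of_telescoping {f Φ : List Bool → ℝ} (hf : ∀ w, 0 ≤ f w)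
    (hΦ : ∀ w, Φ w = f w + Φ (false :: w) + Φ (true :: w))
    (hlim : Tendsto (fun n => ∑ w ∈ words n, Φ w) atTop (𝓝 0)) :
    HasSum f (Φ []) := by
  set s : ℕ → Finset (List Bool) := fun n => (range n).biUnion words
  have hs_mono : Monotone s := fun m n hmn =>
    biUnion_subset_biUnion_of_subset_left _ (range_mono hmn)
  have hs_top : Tendsto s atTop atTop := tendsto_atTop_finset_of_monotone hs_mono fun w =>
    ⟨w.length + 1, mem_biUnion.mpr ⟨w.length, self_mem_range_succ _, mem_words.mpr rfl⟩⟩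
  have htend : Tendsto (fun n => ∑ w ∈ s n, f w) atTop (𝓝 (Φ [])) := by
    have hsum (n : ℕ) : ∑ w ∈ s n, f w = Φ [] - ∑ w ∈ words n, Φ w := by
      rw [eq_sub_iff_add_eq, ← sum_range_sum_words_add hΦ n]
      congr 1
      refine sum_biUnion fun i _ j _ hij => disjoint_left.mpr fun w hi hj => hij ?_
      rw [← mem_words.mp hi, ← mem_words.mp hj]
    simpa [hsum] using tendsto_const_nhds.sub hlim
  have hmono : Monotone fun n => ∑ w ∈ s n, f w := fun m n hmn =>
    sum_le_sum_of_subset_of_nonneg (hs_mono hmn) fun w _ _ => hf w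
  have hsummable : Summable f := summable_of_sum_le hf fun t => by
    obtain ⟨n, hn⟩ := (hs_top.eventually (eventually_ge_atTop t)).exists
    exact (sum_le_sum_of_subset_of_nonneg hn fun w _ _ => hf w).trans
      (hmono.ge_of_tendsto htend n)
  rw [← tendsto_nhds_unique (hsummable.hasSum.comp hs_top) htend]
  exact hsummable.hasSum

def vertex : List Bool → (ℤ × ℤ) × (ℤ × ℤ)
  | [] => ((1, 0), (0, 1))
  | false :: w => ((vertex w).1, (vertex w).1 + (vertex w).2)
  | true :: w => ((vertex w).1 + (vertex w).2, (vertex w).2)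

lemma vertex_mem_S (w : List Bool) : vertex w ∈ S := by
  induction w with
  | nil => simp [vertex, S]
  | cons b w ih =>
    obtain ⟨h₁, h₂, h₃, h₄, hdet⟩ := ih
    cases b <;> refine ⟨?_, ?_, ?_, ?_, ?_⟩ <;> simp only [vertex, Prod.fst_add, Prod.snd_add] <;>
      first | omega | linear_combination hdet

lemma one_le_coord_sum_of_mem_S {p : (ℤ × ℤ) × (ℤ × ℤ)} (hp : p ∈ S) :
    1 ≤ p.1.1 + p.1.2 ∧ 1 ≤ p.2.1 + p.2.2 := by
  obtain ⟨h₁, h₂, h₃, h₄, hdet⟩ := hp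
  constructor <;> by_contra! h <;> nlinarith

lemma coord_sum_vertex_cons_lt_iff (b : Bool) (w : List Bool) :
    (vertex (b :: w)).1.1 + (vertex (b :: w)).1.2 < (vertex (b :: w)).2.1 + (vertex (b :: w)).2.2
      ↔ b = false := by
  have := one_le_coord_sum_of_mem_S (vertex_mem_S w)
  cases b <;> simp only [vertex, Prod.fst_add, Prod.snd_add, iff_true, iff_false,
    Bool.true_eq_false, not_lt] <;> omega

lemma coord_sum_vertex_cons_ne (b : Bool) (w : List Bool) :
    (vertex (b :: w)).1.1 + (vertex (b :: w)).1.2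
      ≠ (vertex (b :: w)).2.1 + (vertex (b :: w)).2.2 := by
  have := one_le_coord_sum_of_mem_S (vertex_mem_S w)
  cases b <;> simp only [vertex, Prod.fst_add, Prod.snd_add] <;> omega

lemma vertex_injective : Function.Injective vertex := by
  intro u v huv
  induction u generalizing v with
  | nil =>
    cases v with
    | nil => rfl
    | cons b v => exact absurd (by rw [← huv]; rfl) (coord_sum_vertex_cons_ne b v)
  | cons a u ih =>
    cases v with
    | nil => exact absurd (by rw [huv]; rfl) (coord_sum_vertex_cons_ne a u)
    | cons b v =>
      have hab : a = b := by
        have h := coord_sum_vertex_cons_lt_iff a u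
        rw [huv, coord_sum_vertex_cons_lt_iff] at h
        cases a <;> cases b <;> simp at h ⊢
      subst hab
      congr 1
      apply ih
      cases a <;> simp only [vertex, Prod.mk.injEq] at huv <;> obtain ⟨h₁, h₂⟩ := huv
      · exact Prod.ext h₁ (add_left_cancel (h₁ ▸ h₂))
      · exact Prod.ext (add_right_cancel (h₂ ▸ h₁)) h₂

lemma mem_S_trichotomy {p : (ℤ × ℤ) × (ℤ × ℤ)} (hp : p ∈ S) :
    p = ((1, 0), (0, 1)) ∨ p.1 ≤ p.2 ∨ p.2 ≤ p.1 := by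
  obtain ⟨⟨a, b⟩, c, d⟩ := p
  obtain ⟨ha, hb, hc, hd, hdet⟩ := hp
  simp only [Prod.mk_le_mk, Prod.mk.injEq] at *
  rcases lt_or_ge c a with hca | hac <;> rcases lt_or_ge b d with hbd | hdb
  · have hb0 : b = 0 := by nlinarith
    have hc0 : c = 0 := by nlinarith
    subst hb0 hc0
    have : a = 1 ∧ d = 1 := by constructor <;> nlinarith
    tauto
  · exact Or.inr (Or.inr ⟨hca.le, hdb⟩)
  · exact Or.inr (Or.inl ⟨hac, hbd.le⟩)
  · rcases hdb.eq_or_lt with rfl | hdb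
    · exact Or.inr (Or.inl ⟨hac, le_rfl⟩)
    · nlinarith

lemma vertex_surjective {p : (ℤ × ℤ) × (ℤ × ℤ)} (hp : p ∈ S) : ∃ w, vertex w = p := by
  induction hn : (p.1.1 + p.1.2 + p.2.1 + p.2.2).toNat using Nat.strong_induction_on
    generalizing p with
  | _ n ih =>
  obtain ⟨hx, hy⟩ := one_le_coord_sum_of_mem_S hp
  obtain ⟨h₁, h₂, h₃, h₄, hdet⟩ := id hp
  rcases mem_S_trichotomy hp with rfl | ⟨hle₁, hle₂⟩ | ⟨hle₁, hle₂⟩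
  · exact ⟨[], rfl⟩
  · have hp' : (p.1, p.2 - p.1) ∈ S := ⟨h₁, h₂, sub_nonneg.mpr hle₁, sub_nonneg.mpr hle₂, by
      simp only [Prod.fst_sub, Prod.snd_sub]; linear_combination hdet⟩
    obtain ⟨w, hw⟩ := ih _ (by simp only [Prod.fst_sub, Prod.snd_sub]; omega) hp' rfl
    exact ⟨false :: w, by simp [vertex, hw]⟩
  · have hp' : (p.1 - p.2, p.2) ∈ S := ⟨sub_nonneg.mpr hle₁, sub_nonneg.mpr hle₂, h₃, h₄, by
      simp only [Prod.fst_sub, Prod.snd_sub]; linear_combination hdet⟩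
    obtain ⟨w, hw⟩ := ih _ (by simp only [Prod.fst_sub, Prod.snd_sub]; omega) hp' rfl
    exact ⟨true :: w, by simp [vertex, hw]⟩

noncomputable def vertexEquiv : List Bool ≃ S :=
  Equiv.ofBijective (fun w => ⟨vertex w, vertex_mem_S w⟩)
    ⟨fun _ _ h => vertex_injective (congrArg Subtype.val h),
      fun ⟨_, hp⟩ => (vertex_surjective hp).imp fun _ hw => Subtype.ext hw⟩

noncomputable def disc (A B C : ℤ) : ℝ := (B : ℝ) ^ 2 - 4 * A * C

section Form
variable (A B C : ℤ)

lemma q_add (x y : ℤ × ℤ) :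
    q A B C (x + y) = q A B C x + q A B C y + polar (q A B C) x y := by
  simp only [polar]; ring

lemma polar_q_eq (x y : ℤ × ℤ) : polar (q A B C) x y =
    ((2 * A * x.1 * y.1 + B * (x.1 * y.2 + x.2 * y.1) + 2 * C * x.2 * y.2 : ℤ) : ℝ) := by
  simp only [polar, q, Prod.fst_add, Prod.snd_add]; push_cast; ring

lemma polar_q_sq_sub (x y : ℤ × ℤ) :
    polar (q A B C) x y ^ 2 - 4 * (q A B C x * q A B C y)
      = disc A B C * ((x.1 * y.2 - x.2 * y.1 : ℤ) : ℝ) ^ 2 := by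
  simp only [polar, q, disc, Prod.fst_add, Prod.snd_add]; push_cast; ring

lemma polar_q_self_add (x y : ℤ × ℤ) :
    polar (q A B C) x (x + y) = polar (q A B C) x y + 2 * q A B C x := by
  simp only [polar, q, Prod.fst_add, Prod.snd_add]; push_cast; ring

lemma polar_q_add_self (x y : ℤ × ℤ) :
    polar (q A B C) (x + y) y = polar (q A B C) x y + 2 * q A B C y := by
  simp only [polar, q, Prod.fst_add, Prod.snd_add]; push_cast; ring

variable {A B C}

lemma one_le_q (hA : 0 < A) (hB : 0 ≤ B) (hC : 0 < C) {v : ℤ × ℤ} (h₁ : 0 ≤ v.1)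
    (h₂ : 0 ≤ v.2) (hv : 1 ≤ v.1 + v.2) : 1 ≤ q A B C v := by
  have hAv : v.1 ≤ A * v.1 ^ 2 := by nlinarith [Int.le_self_sq v.1, sq_nonneg v.1]
  have hCv : v.2 ≤ C * v.2 ^ 2 := by nlinarith [Int.le_self_sq v.2, sq_nonneg v.2]
  have : 1 ≤ A * v.1 ^ 2 + B * v.1 * v.2 + C * v.2 ^ 2 := by
    nlinarith [mul_nonneg (mul_nonneg hB h₁) h₂]
  unfold q; exact_mod_cast this

lemma one_le_polar_q (hA : 0 ≤ A) (hB : 0 < B) (hC : 0 ≤ C) {p : (ℤ × ℤ) × (ℤ × ℤ)}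
    (hp : p ∈ S) : 1 ≤ polar (q A B C) p.1 p.2 := by
  obtain ⟨h₁, h₂, h₃, h₄, hdet⟩ := hp
  rw [polar_q_eq]
  exact_mod_cast show 1 ≤ 2 * A * p.1.1 * p.2.1 + B * (p.1.1 * p.2.2 + p.1.2 * p.2.1)
      + 2 * C * p.1.2 * p.2.2 by
    nlinarith [mul_nonneg h₂ h₃, mul_nonneg (mul_nonneg hA h₁) h₃,
      mul_nonneg (mul_nonneg hC h₂) h₄]

end Form

noncomputable def topographSum (A B C : ℤ) (p : (ℤ × ℤ) × (ℤ × ℤ)) : ℝ :=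
  rootedSum (disc A B C) (q A B C p.1) (q A B C p.2) (polar (q A B C) p.1 p.2)

noncomputable def polarRatio (A B C : ℤ) (p : (ℤ × ℤ) × (ℤ × ℤ)) : ℝ :=
  polar (q A B C) p.1 p.2 / (q A B C p.1 * q A B C p.2)

section Topograph
variable {A B C : ℤ}

lemma polar_q_sq_sub_of_mem_S {p : (ℤ × ℤ) × (ℤ × ℤ)} (hp : p ∈ S) :
    polar (q A B C) p.1 p.2 ^ 2 - 4 * (q A B C p.1 * q A B C p.2) = disc A B C := by
  rw [polar_q_sq_sub, hp.2.2.2.2, Int.cast_one, one_pow, mul_one]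

lemma one_le_q_of_mem_S (hA : 0 < A) (hB : 0 < B) (hC : 0 < C) {p : (ℤ × ℤ) × (ℤ × ℤ)}
    (hp : p ∈ S) : 1 ≤ q A B C p.1 ∧ 1 ≤ q A B C p.2 := by
  obtain ⟨hx, hy⟩ := one_le_coord_sum_of_mem_S hp
  exact ⟨one_le_q hA hB.le hC hp.1 hp.2.1 hx, one_le_q hA hB.le hC hp.2.2.1 hp.2.2.2.1 hy⟩

lemma topographSum_eq_add (hA : 0 < A) (hB : 0 < B) (hC : 0 < C) (hD : 0 < disc A B C)
    {p : (ℤ × ℤ) × (ℤ × ℤ)} (hp : p ∈ S) :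
    topographSum A B C p = 1 / (q A B C p.1 * q A B C p.2 * q A B C (p.1 + p.2))
      + topographSum A B C (p.1, p.1 + p.2) + topographSum A B C (p.1 + p.2, p.2) := by
  obtain ⟨hx, hy⟩ := one_le_q_of_mem_S hA hB hC hp
  have he := one_le_polar_q hA.le hB hC.le hp
  unfold topographSum
  simp only [polar_q_self_add, polar_q_add_self, q_add]
  exact rootedSum_eq_add hD (by linarith) (by linarith) (by linarith) (polar_q_sq_sub_of_mem_S hp)

lemma topographSum_nonneg (hA : 0 < A) (hB : 0 < B) (hC : 0 < C) (hD : 0 < disc A B C)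
    {p : (ℤ × ℤ) × (ℤ × ℤ)} (hp : p ∈ S) : 0 ≤ topographSum A B C p := by
  obtain ⟨hx, hy⟩ := one_le_q_of_mem_S hA hB hC hp
  have he := one_le_polar_q hA.le hB hC.le hp
  exact rootedSum_nonneg hD (div_nonneg (by linarith) (by nlinarith))

lemma topographSum_vertex_nil :
    topographSum A B C (vertex []) = rootedSum (disc A B C) A C B := by
  simp [topographSum, vertex, polar_q_eq, q]

lemma polarRatio_children_le (hA : 0 < A) (hB : 0 < B) (hC : 0 < C) (hD : 0 < disc A B C)
    {p : (ℤ × ℤ) × (ℤ × ℤ)} (hp : p ∈ S) :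
    polarRatio A B C (p.1, p.1 + p.2) + polarRatio A B C (p.1 + p.2, p.2) ≤ polarRatio A B C p := by
  obtain ⟨hx, hy⟩ := one_le_q_of_mem_S hA hB hC hp
  have he := one_le_polar_q hA.le hB hC.le hp
  unfold polarRatio
  simp only [polar_q_self_add, polar_q_add_self, q_add]
  exact children_ratio_le (by linarith) (by linarith) (by linarith)
    ((polar_q_sq_sub_of_mem_S hp).trans_ge hD.le)

lemma length_add_one_le_polar (hA : 0 < A) (hB : 0 < B) (hC : 0 < C) (w : List Bool) :
    (w.length : ℝ) + 1 ≤ polar (q A B C) (vertex w).1 (vertex w).2 := by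
  induction w with
  | nil =>
    simpa [vertex, polar_q_eq] using (show (1 : ℝ) ≤ B by exact_mod_cast hB)
  | cons b w ih =>
    obtain ⟨hx, hy⟩ := one_le_q_of_mem_S hA hB hC (vertex_mem_S w)
    cases b <;> simp only [vertex, polar_q_self_add, polar_q_add_self, List.length_cons] <;>
      push_cast <;> linarith

lemma topographSum_vertex_le (hA : 0 < A) (hB : 0 < B) (hC : 0 < C) (hD : 0 < disc A B C)
    (w : List Bool) :
    topographSum A B C (vertex w) ≤
      (disc A B C + 4) / (4 * √(disc A B C)) * polarRatio A B C (vertex w) / (w.length + 1) := by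
  obtain ⟨hx, hy⟩ := one_le_q_of_mem_S hA hB hC (vertex_mem_S w)
  have he := length_add_one_le_polar hA hB hC w
  have hpolar : 0 < polar (q A B C) (vertex w).1 (vertex w).2 :=
    (Nat.cast_add_one_pos _).trans_le he
  set c := (disc A B C + 4) / (4 * √(disc A B C))
  have hc : 0 ≤ c := by positivity
  calc topographSum A B C (vertex w)
      ≤ c / (q A B C (vertex w).1 * q A B C (vertex w).2) :=
        rootedSum_le hD (one_le_mul_of_one_le_of_one_le hx hy)
          (polar_q_sq_sub_of_mem_S (vertex_mem_S w))
    _ = c * polarRatio A B C (vertex w) / polar (q A B C) (vertex w).1 (vertex w).2 := by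
        unfold polarRatio; field_simp
    _ ≤ c * polarRatio A B C (vertex w) / (w.length + 1) :=
        div_le_div_of_nonneg_left (mul_nonneg hc (div_nonneg hpolar.le (by positivity)))
          (by positivity) he

end Topograph

theorem stmt_2 (A B C : ℤ) (hA : 0 < A) (hB : 0 < B) (hC : 0 < C)
    (hD : 0 < B ^ 2 - 4 * A * C) :
    HasSum
      (fun p : S =>
        1 / (q A B C p.val.1 * q A B C p.val.2 * q A B C (p.val.1 + p.val.2)))
      ((1 / ((B : ℝ) ^ 2 - 4 * A * C)) *
        ((B : ℝ) / ((A : ℝ) * (C : ℝ)) -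
          2 * Real.arsinh (((B : ℝ) / ((A : ℝ) * (C : ℝ))) *
              (Real.sqrt ((B : ℝ) ^ 2 - 4 * A * C) / 2)) /
            Real.sqrt ((B : ℝ) ^ 2 - 4 * A * C))) := by
  have hD' : 0 < disc A B C := by unfold disc; exact_mod_cast hD
  have hterm (w : List Bool) : 0 ≤ 1 / (q A B C (vertex w).1 * q A B C (vertex w).2
      * q A B C ((vertex w).1 + (vertex w).2)) := by
    obtain ⟨hx, hy⟩ := one_le_q_of_mem_S hA hB hC (vertex_mem_S w)
    have he := one_le_polar_q hA.le hB hC.le (vertex_mem_S w)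
    rw [q_add]
    exact one_div_nonneg.mpr (by positivity)
  show HasSum _ (rootedSum (disc A B C) A C B)
  rw [← topographSum_vertex_nil, ← vertexEquiv.hasSum_iff]
  exact hasSum_of_telescoping hterm
    (fun w => topographSum_eq_add hA hB hC hD' (vertex_mem_S w))
    (tendsto_sum_words_zero (by positivity)
      (fun w => topographSum_nonneg hA hB hC hD' (vertex_mem_S w))
      (fun w => polarRatio_children_le hA hB hC hD' (vertex_mem_S w))
      (topographSum_vertex_le hA hB hC hD'))
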